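/- Let β̃_n satisfy √n β̃_n = O_p(1) (the true coefficient is zero), let ν > 0, and let λ_n ≥ 0 satisfy λ_n n^{(ν−1)/2} → ∞. Then (λ_n/√n)·|β̃_n|^{-ν} → ∞ in probability, i.e., for every M > 0, P((λ_n/√n)|β̃_n|^{-ν} > M) → 1. -/

import Mathlib

/-!
Write `X n = √n |β̃_n|` and `c n = λ_n n^{(ν-1)/2}`. Multiplying by `n^{ν/2}` turns the event
`M |β̃_n|^ν < λ_n / √n` into `M (X n)^ν < c n`. Since `X` is bounded in probability, so is
`M X^ν`, and a sequence bounded in probability stays below a deterministic sequence tending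
to infinity with probability tending to one.
-/

open MeasureTheory Filter Set

section

variable {Ω : Type*} [MeasurableSpace Ω]

def BoundedAboveInProbability (μ : Measure Ω) (X : ℕ → Ω → ℝ) : Prop :=
  ∀ ε : ℝ, 0 < ε → ∃ K : ℝ, ∀ n, μ {ω | K < X n ω} < ENNReal.ofReal ε

theorem BoundedAboveInProbability.comp_monotoneOn {μ : Measure Ω} {X : ℕ → Ω → ℝ}
    (hX : BoundedAboveInProbability μ X) (hX0 : ∀ n ω, 0 ≤ X n ω) {g : ℝ → ℝ}
    (hg : MonotoneOn g (Ici 0)) :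
    BoundedAboveInProbability μ (fun n ω => g (X n ω)) := by
  intro ε hε
  obtain ⟨K, hK⟩ := hX ε hε
  refine ⟨g (max K 0), fun n => (measure_mono fun ω hω => ?_).trans_lt (hK n)⟩
  by_contra hle
  exact (hω : g (max K 0) < g (X n ω)).not_ge <|
    hg (hX0 n ω) (le_max_right K 0) ((not_lt.mp hle).trans (le_max_left K 0))

theorem tendsto_measure_of_tendsto_measure_compl {μ : Measure Ω} [IsProbabilityMeasure μ]
    {A : ℕ → Set Ω} (h : Tendsto (fun n => μ (A n)ᶜ) atTop (nhds 0)) :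
    Tendsto (fun n => μ (A n)) atTop (nhds 1) := by
  have hlower : Tendsto (fun n => 1 - μ (A n)ᶜ) atTop (nhds 1) := by
    simpa using ENNReal.Tendsto.sub tendsto_const_nhds h (Or.inl ENNReal.one_ne_top)
  refine tendsto_of_tendsto_of_tendsto_of_le_of_le hlower tendsto_const_nhds
    (fun n => tsub_le_iff_right.mpr ?_) (fun n => prob_le_one)
  simpa using measure_univ_le_add_compl (μ := μ) (A n)

theorem BoundedAboveInProbability.tendsto_measure_lt {μ : Measure Ω} [IsProbabilityMeasure μ]
    {X : ℕ → Ω → ℝ} (hX : BoundedAboveInProbability μ X) {c : ℕ → ℝ}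
    (hc : Tendsto c atTop atTop) :
    Tendsto (fun n => μ {ω | X n ω < c n}) atTop (nhds 1) := by
  refine tendsto_measure_of_tendsto_measure_compl (ENNReal.tendsto_nhds_zero.mpr fun ε hε => ?_)
  obtain ⟨δ, -, hδ, hδε⟩ := ENNReal.lt_iff_exists_real_btwn.mp hε
  obtain ⟨K, hK⟩ := hX δ (ENNReal.ofReal_pos.mp hδ)
  filter_upwards [hc.eventually_gt_atTop K] with n hn
  have hsub : {ω | X n ω < c n}ᶜ ⊆ {ω | K < X n ω} := fun ω hω =>
    hn.trans_le (not_lt.mp hω)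
  exact ((measure_mono hsub).trans_lt ((hK n).trans hδε)).le

end

theorem Real.mul_rpow_sqrt_mul_lt_iff {x a M l ν : ℝ} (hx : 0 < x) (ha : 0 ≤ a) :
    M * (√x * a) ^ ν < l * x ^ ((ν - 1) / 2) ↔ M * a ^ ν < l / √x := by
  have hpow : x ^ ((ν - 1) / 2) = √x ^ ν / √x := by
    rw [Real.sqrt_eq_rpow, ← Real.rpow_mul hx.le, ← Real.rpow_sub hx]
    ring_nf
  rw [Real.mul_rpow (Real.sqrt_nonneg x) ha, hpow,
    show M * (√x ^ ν * a ^ ν) = M * a ^ ν * √x ^ ν by ring, show l * (√x ^ ν / √x) = l / √x * √x ^ ν by ring]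
  exact mul_lt_mul_iff_of_pos_right (Real.rpow_pos_of_pos (Real.sqrt_pos.mpr hx) ν)

theorem stmt4_general {Ω : Type*} [MeasurableSpace Ω] (μ : Measure Ω) [IsProbabilityMeasure μ]
    (β : ℕ → Ω → ℝ) (ν : ℝ) (hν : 0 < ν)
    (lam : ℕ → ℝ)
    (hdiv : Tendsto (fun n : ℕ => lam n * (n : ℝ) ^ ((ν - 1) / 2)) atTop atTop)
    (htight : ∀ ε : ℝ, 0 < ε → ∃ M : ℝ, ∀ n : ℕ,
      μ {ω | M < Real.sqrt n * |β n ω|} < ENNReal.ofReal ε) :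
    ∀ M : ℝ, 0 < M →
      Tendsto (fun n : ℕ => μ {ω | M * |β n ω| ^ ν < lam n / Real.sqrt n})
        atTop (nhds 1) := by
  intro M hM
  have hbounded : BoundedAboveInProbability μ (fun n ω => M * (Real.sqrt n * |β n ω|) ^ ν) :=
    BoundedAboveInProbability.comp_monotoneOn (X := fun n ω => Real.sqrt n * |β n ω|) htight
      (fun n ω => by positivity) fun x hx _ _ hxy =>
        mul_le_mul_of_nonneg_left (Real.rpow_le_rpow hx hxy hν.le) hM.le
  refine tendsto_of_tendsto_of_tendsto_of_le_of_le' (hbounded.tendsto_measure_lt hdiv)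
    tendsto_const_nhds ?_ (Eventually.of_forall fun n => prob_le_one)
  filter_upwards [eventually_gt_atTop 0] with n hn
  exact measure_mono fun ω hω => (Real.mul_rpow_sqrt_mul_lt_iff (Nat.cast_pos.mpr hn) (abs_nonneg _)).mp hω

/-- If √n β̃_n = O_p(1) (the true coefficient is zero), ν > 0 and λ_n ≥ 0 satisfies
λ_n n^{(ν-1)/2} → ∞, then (λ_n/√n)·|β̃_n|^{-ν} → ∞ in probability: for every M > 0,
P((λ_n/√n)|β̃_n|^{-ν} > M) → 1.  (The event is stated in the equivalent form
M·|β̃_n|^ν < λ_n/√n, which encodes the convention |0|^{-ν} = ∞.) -/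
theorem stmt4 {Ω : Type*} [MeasurableSpace Ω] (μ : Measure Ω) [IsProbabilityMeasure μ]
    (β : ℕ → Ω → ℝ) (hmeas : ∀ n, Measurable (β n)) (ν : ℝ) (hν : 0 < ν)
    (lam : ℕ → ℝ) (hlam : ∀ n, 0 ≤ lam n)
    (hdiv : Tendsto (fun n : ℕ => lam n * (n : ℝ) ^ ((ν - 1) / 2)) atTop atTop)
    (htight : ∀ ε : ℝ, 0 < ε → ∃ M : ℝ, ∀ n : ℕ,
      μ {ω | M < Real.sqrt n * |β n ω|} < ENNReal.ofReal ε) :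
    ∀ M : ℝ, 0 < M →
      Tendsto (fun n : ℕ => μ {ω | M * |β n ω| ^ ν < lam n / Real.sqrt n})
        atTop (nhds 1) :=
  stmt4_general μ β ν hν lam hdiv htight
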